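/- arXiv:math/0305250 — 3 statements merged into one kernel-verified Lean document; each statement's English description precedes it below -/
import Mathlib

section
/- For all integers k and l, the equality {e^k, e^l} = ⟨γ_{−k−1/2}, γ_{−l−1/2}⟩ holds; explicitly, ((−1)^k • single k (1:ℝ) · single l 1).coeff(−1), computed in ℝ((e)), equals (π/2) · ((Γ(1/2 − k))⁻¹ • single (−2k−1) (1:ℝ) · ((−2l−1) · (Γ(1/2 − l))⁻¹) • single (−2l−2) 1).coeff(−1), computed in ℝ((y)) with y = √x, where the first factor represents γ_{−k−1/2}(x) = x^{−k−1/2}/Γ(1/2−k) and the second represents the formal y-derivative of γ_{−l−1/2}(x). (This is the Proposition of §3.3: the linear transformation t*_T Hℝ → ℝ((√x))_odd defined on normalized basis elements by e^k ↦ γ_{−k−1/2}(x) is a symplectic embedding.) -/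
open HahnSeries Real

/-!
Both sides vanish unless `k + l = -1`, the left one being `(-1)^k` in that case. For
`l = -1 - k` the right side is `π (2k + 1) / (2 Γ(1/2 - k) Γ(3/2 + k))`, and
`Γ(3/2 + k) = (k + 1/2) Γ(1/2 + k)` together with Euler's reflection formula
`Γ(1/2 - k) Γ(1/2 + k) = π / sin (π (1/2 - k)) = π (-1)^k` reduces it to `(-1)^k` as well.
-/

theorem HahnSeries.smul_single_one {Γ R : Type*} [PartialOrder Γ] [Semiring R] (r : R) (a : Γ) :
    r • single a (1 : R) = single a r := by
  ext n
  simp [coeff_single]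

open scoped Classical in
theorem HahnSeries.coeff_smul_single_mul_smul_single {Γ R : Type*}
    [AddCommMonoid Γ] [PartialOrder Γ] [IsOrderedCancelAddMonoid Γ] [Semiring R]
    (r s : R) (a b c : Γ) :
    ((r • single a (1 : R)) * (s • single b (1 : R))).coeff c = if c = a + b then r * s else 0 := by
  rw [smul_single_one, smul_single_one, single_mul_single, coeff_single]

theorem Real.Gamma_half_sub_int_mul_Gamma_half_add_int (k : ℤ) :
    Gamma (1 / 2 - k) * Gamma (1 / 2 + k) = π * (-1) ^ k := by
  have hsin : sin (π * (1 / 2 - k)) = (-1) ^ k := by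
    rw [show π * (1 / 2 - k) = π / 2 - k * π by ring, sin_pi_div_two_sub, cos_int_mul_pi]
  rw [show (1 / 2 + k : ℝ) = 1 - (1 / 2 - k) by ring, Gamma_mul_Gamma_one_sub, hsin,
    div_eq_mul_inv, ← zpow_neg, zpow_neg, ← inv_zpow, inv_neg_one]

theorem Real.Gamma_half_sub_int_mul_Gamma_three_halves_add_int (k : ℤ) :
    Gamma (1 / 2 - k) * Gamma (3 / 2 + k) = (2 * k + 1) / 2 * π * (-1) ^ k := by
  have hk : (1 / 2 + k : ℝ) ≠ 0 := by
    rw [show (1 / 2 + k : ℝ) = ((2 * k + 1 : ℤ) : ℝ) / 2 by push_cast; ring]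
    exact div_ne_zero (by exact_mod_cast (by omega : 2 * k + 1 ≠ 0)) two_ne_zero
  rw [show (3 / 2 + k : ℝ) = 1 / 2 + k + 1 by ring, Gamma_add_one hk, mul_left_comm,
    Gamma_half_sub_int_mul_Gamma_half_add_int]
  ring

/-- The Proposition of §3.3: the map `e^k ↦ γ_{−k−1/2}(x)` is a symplectic
embedding, i.e. `{e^k, e^l} = ⟨γ_{−k−1/2}, γ_{−l−1/2}⟩` for all integers
`k, l`.  The left-hand side is computed in `ℝ((e))`, using
`I (single k 1) = (−1)^k • single k 1`; the right-hand side is computed in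
`ℝ((y))` with `y = √x`, where `γ_{−k−1/2}(x) = x^{−k−1/2}/Γ(1/2−k)` is
represented by `Γ(1/2 − k)⁻¹ • single (−2k−1) 1` and the formal `y`-derivative
of `γ_{−l−1/2}(x)` by `((−2l−1) · Γ(1/2 − l)⁻¹) • single (−2l−2) 1`. -/
theorem symplectic_embedding_divided_powers (k l : ℤ) :
    (((-1 : ℝ) ^ k • HahnSeries.single k (1 : ℝ)) * HahnSeries.single l (1 : ℝ)).coeff (-1) =
      Real.pi / 2 *
        (((Real.Gamma (1 / 2 - (k : ℝ)))⁻¹ • HahnSeries.single (-2 * k - 1) (1 : ℝ) *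
            (((-2 * (l : ℝ) - 1) * (Real.Gamma (1 / 2 - (l : ℝ)))⁻¹) •
              HahnSeries.single (-2 * l - 2) (1 : ℝ))).coeff (-1)) := by
  rw [← one_smul ℝ (single l (1 : ℝ)), coeff_smul_single_mul_smul_single,
    coeff_smul_single_mul_smul_single]
  by_cases hkl : k + l = -1
  · obtain rfl : l = -1 - k := by omega
    rw [if_pos (by omega), if_pos (by omega)]
    have hk : (2 * k + 1 : ℝ) ≠ 0 := by exact_mod_cast (by omega : 2 * k + 1 ≠ 0)
    have hsq : (-1 : ℝ) ^ k * (-1) ^ k = 1 := by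
      rw [← mul_zpow]
      norm_num
    push_cast
    rw [show (1 / 2 - (-1 - k) : ℝ) = 3 / 2 + k by ring,
      show π / 2 * ((Gamma (1 / 2 - k))⁻¹ * ((-2 * (-1 - k) - 1) * (Gamma (3 / 2 + k))⁻¹)) =
        π * (2 * k + 1) / 2 * (Gamma (1 / 2 - k) * Gamma (3 / 2 + k))⁻¹ by ring,
      Gamma_half_sub_int_mul_Gamma_three_halves_add_int]
    field_simp
    linear_combination hsq
  · rw [if_neg (by omega), if_neg (by omega)]
    ring
end

section
/- Let R be a commutative ring. The form {f,g} := (I f · g).coeff(−1) on Laurent series R((x)) is antisymmetric: for all f, g ∈ R((x)), (I g · f).coeff(−1) = −(I f · g).coeff(−1). -/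
open HahnSeries

/-- The involution `I` on Laurent series induced by the inversion `z ↦ z⁻¹`
of the circle, defined coefficientwise by `(I f).coeff n = (−1)^n • f.coeff n`. -/
noncomputable def circleInv {R : Type*} [CommRing R] (f : LaurentSeries R) :
    LaurentSeries R where
  coeff n := ((Int.negOnePow n : ℤ) : ℤ) • f.coeff n
  isPWO_support' := f.isPWO_support'.mono (by
    intro n hn
    simp only [Function.mem_support, ne_eq] at hn ⊢
    intro h
    exact hn (by rw [h, smul_zero]))

/-!
`I` is an involutive ring automorphism of `R((x))` (it is `x ↦ -x`), and it changes the sign of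
the residue, since `(-1)^(-1) = -1`. Hence
`(I g · f)₋₁ = -(I (I g · f))₋₁ = -(g · I f)₋₁ = -(I f · g)₋₁`.
-/

section

variable {R : Type*} [CommRing R]

@[simp]
theorem coeff_circleInv (f : LaurentSeries R) (n : ℤ) :
    (circleInv f).coeff n = (n.negOnePow : ℤ) • f.coeff n :=
  rfl

@[simp]
theorem support_circleInv (f : LaurentSeries R) : (circleInv f).support = f.support := by
  ext n
  simp

@[simp]
theorem circleInv_circleInv (f : LaurentSeries R) : circleInv (circleInv f) = f := by
  ext n
  rw [coeff_circleInv, coeff_circleInv, smul_smul, ← Units.val_mul, Int.units_mul_self,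
    Units.val_one, one_smul]

theorem circleInv_mul (f g : LaurentSeries R) :
    circleInv (f * g) = circleInv f * circleInv g := by
  ext n
  have h_antidiagonal :
      Finset.antidiagonal (circleInv f).isPWO_support (circleInv g).isPWO_support n =
        Finset.antidiagonal f.isPWO_support g.isPWO_support n := by
    ext; simp
  rw [coeff_circleInv, coeff_mul, coeff_mul, h_antidiagonal, Finset.smul_sum]
  refine Finset.sum_congr rfl fun ij hij => ?_
  rw [← (Finset.mem_antidiagonal.mp hij).2.2, Int.negOnePow_add, coeff_circleInv, coeff_circleInv,
    smul_mul_smul_comm, Units.val_mul]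

theorem coeff_neg_one_circleInv (f : LaurentSeries R) :
    (circleInv f).coeff (-1) = -f.coeff (-1) := by
  simp [Int.negOnePow_neg, Int.negOnePow_one]

end

/-- The form `{f,g} := (I f · g).coeff (−1)` on `R((x))` is antisymmetric. -/
theorem symplectic_form_antisymm {R : Type*} [CommRing R] (f g : LaurentSeries R) :
    (circleInv g * f).coeff (-1) = -((circleInv f * g).coeff (-1)) := by
  calc (circleInv g * f).coeff (-1)
      = -(circleInv (circleInv g * f)).coeff (-1) := by rw [coeff_neg_one_circleInv, neg_neg]
    _ = -(circleInv f * g).coeff (-1) := by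
      rw [circleInv_mul, circleInv_circleInv, mul_comm]
end

section
/- Let A be a commutative ring and let f ∈ A((x)) be a Laurent series such that f.coeff 0 is a unit of A and f.coeff n is nilpotent for every integer n < 0. Then f is a unit of the ring A((x)). (This is the multiplicative invertibility underlying the group Ǧ of invertible nil-Laurent series of §3.2: Laurent series with g₀ a unit and nilpotent coefficients in negative degrees are invertible.) -/
/-!
Split `f` as its principal part `truncLT 0 f` plus a series supported in degrees `≥ 0`.
The principal part has finitely many terms, each with nilpotent coefficient, so it is
nilpotent; the other summand has order `0` and unit leading coefficient `f.coeff 0`, so it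
is a unit. A unit plus a nilpotent element is a unit.
-/

open HahnSeries

namespace HahnSeries

variable {Γ R : Type*}

theorem eq_sum_single_of_support_finite [PartialOrder Γ] [AddCommMonoid R] {x : R⟦Γ⟧}
    (hx : x.support.Finite) : x = ∑ i ∈ hx.toFinset, single i (x.coeff i) := by
  ext g
  rw [coeff_sum, Finset.sum_eq_single g]
  · rw [coeff_single_same]
  · intro i _ hig
    rw [coeff_single_of_ne hig.symm]
  · intro hg
    rw [Set.Finite.mem_toFinset, mem_support, not_not] at hg
    rw [hg, single_eq_zero, coeff_zero]

theorem isNilpotent_of_support_finite [AddCommMonoid Γ] [PartialOrder Γ]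
    [IsOrderedCancelAddMonoid Γ] [CommSemiring R] {x : R⟦Γ⟧} (hx : x.support.Finite)
    (hnil : ∀ i, IsNilpotent (x.coeff i)) : IsNilpotent x := by
  rw [eq_sum_single_of_support_finite hx]
  refine isNilpotent_sum fun i _ ↦ ?_
  obtain ⟨n, hn⟩ := hnil i
  exact ⟨n, by rw [single_pow, hn, single_eq_zero]⟩

theorem isUnit_of_isUnit_coeff_zero [AddCommMonoid Γ] [LinearOrder Γ]
    [IsOrderedCancelAddMonoid Γ] [CommRing R] {x : R⟦Γ⟧} (hneg : ∀ i < 0, x.coeff i = 0)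
    (h0 : IsUnit (x.coeff 0)) : IsUnit x := by
  nontriviality R
  have hx : x ≠ 0 := ne_zero_of_coeff_ne_zero h0.ne_zero
  have horder : x.order = 0 :=
    le_antisymm (order_le_of_coeff_ne_zero h0.ne_zero)
      (not_lt.mp fun h ↦ (coeff_order_eq_zero.not.mpr hx) (hneg _ h))
  refine isUnit_of_isUnit_leadingCoeff_AddUnitOrder ?_ (horder ▸ isAddUnit_zero)
  rwa [leadingCoeff_eq, horder]

end HahnSeries

theorem LaurentSeries.support_truncLT_finite {R : Type*} [Zero R] (f : LaurentSeries R) (n : ℤ) :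
    (truncLT n f).support.Finite := by
  refine (Set.finite_Ico f.order n).subset fun i hi ↦ ?_
  rw [support_truncLT] at hi
  exact ⟨order_le_of_coeff_ne_zero hi.1, hi.2⟩

/-- A nil-Laurent series is invertible: if `f ∈ A((x))` has `f.coeff 0` a unit
of `A` and `f.coeff n` nilpotent for every `n < 0`, then `f` is a unit of the
ring `A((x))` of Laurent series. -/
theorem nilLaurent_isUnit {A : Type*} [CommRing A] (f : LaurentSeries A)
    (h0 : IsUnit (f.coeff 0)) (hneg : ∀ n : ℤ, n < 0 → IsNilpotent (f.coeff n)) :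
    IsUnit f := by
  have hprincipal : IsNilpotent (truncLT 0 f) := by
    refine isNilpotent_of_support_finite (f.support_truncLT_finite 0) fun i ↦ ?_
    rw [HahnSeries.coeff_truncLT]
    split_ifs with hi
    exacts [hneg i hi, IsNilpotent.zero]
  have hregular : IsUnit (f - truncLT 0 f) := by
    refine isUnit_of_isUnit_coeff_zero (fun i hi ↦ ?_) ?_
    · rw [coeff_sub, coeff_truncLT_of_lt hi, sub_self]
    · rwa [coeff_sub, coeff_truncLT_of_le le_rfl, sub_zero]
  simpa using hprincipal.isUnit_add_left_of_commute hregular (Commute.all _ _)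
end
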